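/- arXiv:1803.11330 — 3 statements merged into one kernel-verified Lean document; each statement's English description precedes it below -/
import Mathlib

section
/- Let W be a Coxeter group with generators s_i (i ∈ I), w ∈ W, and J ⊆ I such that ℓ(s_j w) = ℓ(w) − 1 for all j ∈ J. Then the standard parabolic subgroup W_J is finite and w = w_J^∘ · w' for some w' ∈ W with ℓ(w) = ℓ(w') + ℓ(w_J^∘), where w_J^∘ is the longest element of W_J. -/
/-!
`W` acts on `W × ℤˣ` by `sᵢ • (t, ε) = (sᵢ t sᵢ, ±ε)`, the sign flipping exactly when `t = sᵢ`.
Along a word `ω` the sign counts the occurrences of `t` in the left inversion sequence of `ω`, so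
their parity depends only on `π ω`; comparing `ω` with a word `i :: ν` of the same element shows
that every left descent `sᵢ` of `π ω` occurs in that sequence (the exchange condition).

If each `sⱼ`, `j ∈ J`, is a left descent of `w`, they therefore lie in the inversion sequence of a
reduced word of `w`, a finite set. By exchange, elements of `W_J` have reduced words in the letters
`J`, and inducting along such a word gives `ℓ u + ℓ (u⁻¹ w) = ℓ w` for `u ∈ W_J`: an ascent `sᵢ`
of `u` that is a descent of `w = u (u⁻¹ w)` is conjugated by `u` into a left inversion of `u⁻¹ w`.
So `W_J` consists of products of at most `ℓ w` elements of a finite set, and its longest element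
is a prefix of `w`.
-/

theorem Set.Finite.setOf_list_prod_length_le {G : Type*} [Monoid G] {S : Set G} (hS : S.Finite)
    (n : ℕ) : {x : G | ∃ l : List G, (∀ y ∈ l, y ∈ S) ∧ l.length ≤ n ∧ l.prod = x}.Finite := by
  have := hS.to_subtype
  refine ((List.finite_length_le S n).image fun l => (l.map (↑)).prod).subset ?_
  rintro _ ⟨l, hlS, hlen, rfl⟩
  obtain ⟨l', rfl⟩ : l ∈ Set.range (List.map ((↑) : S → G)) := by rwa [Set.range_list_map_coe]
  exact ⟨l', by simpa using hlen, rfl⟩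

namespace CoxeterSystem

variable {B W : Type*} [Group W] {M : CoxeterMatrix B} (cs : CoxeterSystem M W)

local prefix:100 "s " => cs.simple
local prefix:100 "π " => cs.wordProd
local prefix:100 "ℓ " => cs.length
local prefix:100 "lis " => cs.leftInvSeq

theorem prod_map_reverse_alternatingWord {G : Type*} [Monoid G] (f : B → G) (i j : B) (m : ℕ) :
    ((alternatingWord j i (2 * m)).reverse.map f).prod = (f i * f j) ^ m := by
  induction m with
  | zero => simp [alternatingWord]
  | succ m ih =>
    rw [show 2 * (m + 1) = 2 * m + 1 + 1 by ring, alternatingWord_succ', alternatingWord_succ']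
    simp [ih, pow_succ, parity_simps, -List.map_reverse]

theorem leftInvSeq_alternatingWord (i j : B) (p : ℕ) :
    lis (alternatingWord j i (2 * p)) =
      (List.range (2 * p)).map fun k => s j * (s i * s j) ^ k := by
  refine List.ext_getElem (by simp) fun k hk _ => ?_
  rw [getElem_leftInvSeq_alternatingWord cs j i p k (by simpa using hk),
    prod_alternatingWord_eq_mul_pow]
  simp [parity_simps, Nat.mul_add_div]

section SignedConj

variable [DecidableEq W]

def signedConj (i : B) (p : W × ℤˣ) : W × ℤˣ :=
  (s i * p.1 * s i, (if p.1 = s i then -1 else 1) * p.2)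

theorem involutive_signedConj (i : B) : Function.Involutive (cs.signedConj i) := by
  rintro ⟨t, ε⟩
  have hfix : s i * t * s i = s i ↔ t = s i := by
    constructor <;> intro h
    · simpa [mul_assoc] using congrArg (fun x => s i * x * s i) h
    · simp [h]
  simp only [signedConj, hfix, Prod.mk.injEq]
  refine ⟨by simp [mul_assoc], ?_⟩
  by_cases ht : t = s i <;> simp [ht]

def signedConjPerm (i : B) : Equiv.Perm (W × ℤˣ) :=
  (cs.involutive_signedConj i).toPerm

theorem count_map_conj_simple (l : List W) (i : B) (t : W) :
    (l.map (MulAut.conj (s i))).count t = l.count (s i * t * s i) := by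
  conv_lhs => rw [show t = MulAut.conj (s i) (s i * t * s i) by simp [mul_assoc]]
  exact List.count_map_of_injective _ _ (MulAut.conj (s i)).injective _

theorem prod_map_reverse_signedConjPerm_apply (ω : List B) (t : W) (ε : ℤˣ) :
    (ω.reverse.map cs.signedConjPerm).prod (t, ε) =
      ((π ω)⁻¹ * t * π ω, (-1) ^ (lis ω).count t * ε) := by
  induction ω generalizing t ε with
  | nil => simp
  | cons i ω ih =>
    simp only [List.reverse_cons, List.map_append, List.map_singleton, List.prod_append,
      List.prod_singleton, Equiv.Perm.mul_apply, signedConjPerm,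
      Function.Involutive.coe_toPerm, signedConj, ih, wordProd_cons, leftInvSeq, List.count_cons,
      count_map_conj_simple, mul_inv_rev, inv_simple]
    by_cases ht : t = s i
    · subst ht; simp [pow_succ, mul_assoc]
    · simp [ht, Ne.symm ht, mul_assoc]

theorem isLiftable_signedConjPerm : M.IsLiftable cs.signedConjPerm := by
  intro i j
  ext ⟨t, ε⟩ : 1
  -- the inversion sequence `s j (s i s j) ^ k`, `k < 2 * M i j`, repeats with period `M i j`
  rw [← prod_map_reverse_alternatingWord, prod_map_reverse_signedConjPerm_apply,
    prod_alternatingWord_eq_mul_pow, leftInvSeq_alternatingWord, two_mul, List.range_add]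
  have hper : ((List.range (M i j)).map fun k => M i j + k).map (fun k => s j * (s i * s j) ^ k)
      = (List.range (M i j)).map fun k => s j * (s i * s j) ^ k := by
    simp [Function.comp_def, pow_add, simple_mul_simple_pow]
  simp [List.map_append, hper, ← two_mul, pow_mul]

def signedConjRep : W →* Equiv.Perm (W × ℤˣ) :=
  cs.lift ⟨cs.signedConjPerm, cs.isLiftable_signedConjPerm⟩

theorem signedConjRep_wordProd_inv_apply (ω : List B) (t : W) (ε : ℤˣ) :
    cs.signedConjRep (π ω)⁻¹ (t, ε) = ((π ω)⁻¹ * t * π ω, (-1) ^ (lis ω).count t * ε) := by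
  have hsimple : cs.signedConjRep ∘ cs.simple = cs.signedConjPerm :=
    funext (cs.lift_apply_simple cs.isLiftable_signedConjPerm)
  have hprod : cs.signedConjRep (π ω)⁻¹ = (ω.reverse.map cs.signedConjPerm).prod := by
    rw [← wordProd_reverse, wordProd, map_list_prod, List.map_map, hsimple]
  rw [hprod, prod_map_reverse_signedConjPerm_apply]

theorem neg_one_pow_count_leftInvSeq_eq {ω ω' : List B} (h : π ω = π ω') (t : W) :
    (-1 : ℤˣ) ^ (lis ω).count t = (-1) ^ (lis ω').count t := by
  have := congrArg (fun w => (cs.signedConjRep w⁻¹ (t, 1)).2) h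
  simpa only [signedConjRep_wordProd_inv_apply, mul_one] using this

end SignedConj

theorem simple_mem_leftInvSeq {ω : List B} {i : B} (h : cs.IsLeftDescent (π ω) i) :
    s i ∈ lis ω := by
  classical
  obtain ⟨ν, hν, hνω⟩ := cs.exists_isReduced (s i * π ω)
  have hν_not : s i ∉ lis ν := fun hmem => by
    have := (cs.isLeftInversion_of_mem_leftInvSeq hν hmem).2
    rw [← hνω, simple_mul_simple_cancel_left] at this
    exact lt_asymm h this
  have hword : π (i :: ν) = π ω := by rw [wordProd_cons, ← hνω, simple_mul_simple_cancel_left]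
  have hcount : (lis (i :: ν)).count (s i) = 1 := by
    simp [leftInvSeq, count_map_conj_simple, List.count_eq_zero.mpr hν_not]
  by_contra hmem
  have := cs.neg_one_pow_count_leftInvSeq_eq hword (s i)
  rw [hcount, List.count_eq_zero.mpr hmem] at this
  exact absurd this (by decide)

theorem exists_simple_mul_wordProd_eq_eraseIdx {ω : List B} {i : B}
    (h : cs.IsLeftDescent (π ω) i) : ∃ k < ω.length, s i * π ω = π (ω.eraseIdx k) := by
  obtain ⟨k, hk, hget⟩ := List.getElem_of_mem (cs.simple_mem_leftInvSeq h)
  refine ⟨k, by simpa using hk, ?_⟩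
  rw [← cs.getD_leftInvSeq_mul_wordProd, List.getD_eq_getElem _ _ hk, hget]

theorem leftInvSeq_append (ω ω' : List B) :
    lis (ω ++ ω') = lis ω ++ (lis ω').map (MulAut.conj (π ω)) := by
  induction ω with
  | nil => simp
  | cons i ω ih => simp [leftInvSeq, ih, wordProd_cons, List.map_map, Function.comp_def]

theorem isLeftInversion_conj_of_isLeftDescent_mul {u v : W} {i : B}
    (h : cs.IsLeftDescent (u * v) i) (hu : ¬cs.IsLeftDescent u i) :
    cs.IsLeftInversion v (u⁻¹ * s i * u) := by
  obtain ⟨a, ha, rfl⟩ := cs.exists_isReduced u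
  obtain ⟨b, hb, rfl⟩ := cs.exists_isReduced v
  rw [← wordProd_append] at h
  have hmem := cs.simple_mem_leftInvSeq h
  rw [leftInvSeq_append, List.mem_append, List.mem_map] at hmem
  rcases hmem with ha' | ⟨t, ht, hts⟩
  · exact absurd (cs.isLeftInversion_of_mem_leftInvSeq ha ha').2 hu
  · rw [← hts, MulAut.conj_apply]
    simpa [mul_assoc] using cs.isLeftInversion_of_mem_leftInvSeq hb ht

theorem exists_isReduced_simple_mul {J : Set B} {ω : List B} {i : B} (hω : cs.IsReduced ω)
    (hωJ : ∀ k ∈ ω, k ∈ J) (hi : i ∈ J) :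
    ∃ ω' : List B, cs.IsReduced ω' ∧ (∀ k ∈ ω', k ∈ J) ∧ π ω' = s i * π ω := by
  by_cases hd : cs.IsLeftDescent (π ω) i
  · obtain ⟨k, hk, heq⟩ := cs.exists_simple_mul_wordProd_eq_eraseIdx hd
    refine ⟨ω.eraseIdx k, ?_, fun a ha => hωJ a (List.mem_of_mem_eraseIdx ha), heq.symm⟩
    have := cs.isLeftDescent_iff.mp hd
    rw [IsReduced, ← heq, List.length_eraseIdx_of_lt hk, ← hω.eq]
    omega
  · refine ⟨i :: ω, ?_, ?_, wordProd_cons ..⟩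
    · rw [IsReduced, wordProd_cons, cs.not_isLeftDescent_iff.mp hd, hω.eq, List.length_cons]
    · simpa [hi] using hωJ

theorem exists_isReduced_of_mem_closure {J : Set B} {u : W}
    (hu : u ∈ Subgroup.closure (cs.simple '' J)) :
    ∃ ω : List B, cs.IsReduced ω ∧ (∀ k ∈ ω, k ∈ J) ∧ π ω = u := by
  induction hu using Subgroup.closure_induction_left with
  | one => exact ⟨[], by simp [IsReduced], by simp, rfl⟩
  | mul_left _ hx _ _ ih =>
    obtain ⟨i, hi, rfl⟩ := hx
    obtain ⟨ω, hω, hωJ, rfl⟩ := ih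
    exact cs.exists_isReduced_simple_mul hω hωJ hi
  | inv_mul_cancel _ hx _ _ ih =>
    obtain ⟨i, hi, rfl⟩ := hx
    obtain ⟨ω, hω, hωJ, rfl⟩ := ih
    rw [inv_simple]
    exact cs.exists_isReduced_simple_mul hω hωJ hi

theorem length_simple_mul_add_length_inv_mul {u w : W} {i : B} (hw : cs.IsLeftDescent w i)
    (hu : ℓ u + ℓ (u⁻¹ * w) = ℓ w) (hui : ¬cs.IsLeftDescent u i) :
    ℓ (s i * u) + ℓ ((s i * u)⁻¹ * w) = ℓ w := by
  have hdrop : ℓ ((s i * u)⁻¹ * w) < ℓ (u⁻¹ * w) := by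
    simpa [mul_assoc] using
      (cs.isLeftInversion_conj_of_isLeftDescent_mul (v := u⁻¹ * w) (by simpa using hw) hui).2
  have hrise := cs.not_isLeftDescent_iff.mp hui
  have htri := cs.length_mul_le (s i * u) ((s i * u)⁻¹ * w)
  rw [mul_inv_cancel_left] at htri
  omega

theorem length_wordProd_add_length_inv_mul {w : W} {J : Set B}
    (hJ : ∀ j ∈ J, cs.IsLeftDescent w j) {ω : List B} (hω : cs.IsReduced ω)
    (hωJ : ∀ k ∈ ω, k ∈ J) : ℓ (π ω) + ℓ ((π ω)⁻¹ * w) = ℓ w := by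
  induction ω with
  | nil => simp
  | cons i ω ih =>
    have hω' : cs.IsReduced ω := by simpa using hω.drop 1
    have hasc : ¬cs.IsLeftDescent (π ω) i := by
      rw [cs.not_isLeftDescent_iff, ← wordProd_cons, hω.eq, hω'.eq, List.length_cons]
    rw [wordProd_cons]
    exact cs.length_simple_mul_add_length_inv_mul (hJ i (hωJ i (by simp)))
      (ih hω' fun k hk => hωJ k (by simp [hk])) hasc

theorem length_add_length_inv_mul_of_mem_closure {w u : W} {J : Set B}
    (hJ : ∀ j ∈ J, cs.IsLeftDescent w j) (hu : u ∈ Subgroup.closure (cs.simple '' J)) :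
    ℓ u + ℓ (u⁻¹ * w) = ℓ w := by
  obtain ⟨ω, hω, hωJ, rfl⟩ := cs.exists_isReduced_of_mem_closure hu
  exact cs.length_wordProd_add_length_inv_mul hJ hω hωJ

theorem finite_closure_simple_of_forall_isLeftDescent {w : W} {J : Set B}
    (hJ : ∀ j ∈ J, cs.IsLeftDescent w j) : (Subgroup.closure (cs.simple '' J) : Set W).Finite := by
  obtain ⟨Ω, -, hΩ⟩ := cs.exists_isReduced w
  have hS : (cs.simple '' J).Finite := by
    refine (lis Ω).finite_toSet.subset ?_
    rintro _ ⟨j, hj, rfl⟩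
    exact cs.simple_mem_leftInvSeq (hΩ ▸ hJ j hj)
  refine (hS.setOf_list_prod_length_le (ℓ w)).subset fun u hu => ?_
  obtain ⟨ω, hω, hωJ, rfl⟩ := cs.exists_isReduced_of_mem_closure hu
  have := cs.length_add_length_inv_mul_of_mem_closure hJ hu
  refine ⟨ω.map cs.simple, ?_, ?_, rfl⟩
  · simpa using fun k hk => ⟨k, hωJ k hk, rfl⟩
  · rw [List.length_map, ← hω.eq]
    omega

end CoxeterSystem

/-- Let `W` be a Coxeter group with generators `sᵢ (i ∈ I)`, `w ∈ W`, and `J ⊆ I` such that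
`ℓ(sⱼ w) = ℓ(w) − 1` for all `j ∈ J`. Then the standard parabolic subgroup `W_J` is finite and
`w = w_J^∘ * w'` for some `w' ∈ W` with `ℓ(w) = ℓ(w') + ℓ(w_J^∘)`, where `w_J^∘` is the
longest element of `W_J`. -/
theorem descent_set_parabolic_finite {I : Type*} {W : Type*} [Group W]
    {M : CoxeterMatrix I} (cs : CoxeterSystem M W) (w : W) (J : Set I)
    (hdesc : ∀ j ∈ J, cs.length (cs.simple j * w) + 1 = cs.length w) :
    Finite (Subgroup.closure (cs.simple '' J) : Subgroup W) ∧
    ∃ w₀ ∈ Subgroup.closure (cs.simple '' J),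
      (∀ u ∈ Subgroup.closure (cs.simple '' J), cs.length u ≤ cs.length w₀) ∧
      ∃ w' : W, w = w₀ * w' ∧ cs.length w = cs.length w' + cs.length w₀ := by
  have hJ : ∀ j ∈ J, cs.IsLeftDescent w j := fun j hj => cs.isLeftDescent_iff.mpr (hdesc j hj)
  have hfin := cs.finite_closure_simple_of_forall_isLeftDescent hJ
  obtain ⟨w₀, hw₀, hmax⟩ := Set.exists_max_image _ cs.length hfin ⟨1, one_mem _⟩
  have hprefix := cs.length_add_length_inv_mul_of_mem_closure hJ hw₀
  exact ⟨hfin.to_subtype, w₀, hw₀, hmax, w₀⁻¹ * w, (mul_inv_cancel_left w₀ w).symm, by omega⟩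
end

section
/- Let W be a Coxeter group on index set I whose Coxeter diagram connects i to j (i ≠ j), and let (i = i_0, i_1, …, i_d = j) be a sequence with m_{i_{k−1}, i_k} > 2 for all k. Then w = s_{i_d} ⋯ s_{i_1} satisfies: w(α_i) is a positive linear combination of simple roots in which the coefficient of α_j is strictly positive (where α_i denotes simple roots of the standard geometric representation). -/
/-!
Each reflection `s_t` in the chain only changes the `α_t`-coordinate, replacing it by
`-⟨f, α_t^∨⟩`. Along the chain the current vector `f` is nonnegative, vanishes at `t`
(the sequence has no repetitions) and is positive at the previous index `l`, where
`a l t < 0`; since all other off-diagonal pairings are `≤ 0`, this makes `⟨f, α_t^∨⟩ < 0`,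
so the new coordinate at `t` is positive and positivity propagates to the end of the chain.
-/

/-- The simple reflection `s_k` acting on the root lattice `I →₀ ℤ`
(with simple roots the standard basis vectors), determined by the integral Cartan
pairings `a i j = ⟨αᵢ, αⱼ^∨⟩`: it sends `f ↦ f − ⟨f, α_k^∨⟩ α_k`. -/
noncomputable def simpleRefl {I : Type*} [DecidableEq I] (a : I → I → ℤ) (k : I) (f : I →₀ ℤ) : I →₀ ℤ :=
  f - (f.sum fun i c => c * a i k) • Finsupp.single k 1

section SimpleRefl

variable {I : Type*} {a : I → I → ℤ} {f : I →₀ ℤ} {k l : I}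

theorem sum_mul_cartan_neg (haneg : ∀ i j, i ≠ j → a i j ≤ 0) (hf : 0 ≤ f) (hk : f k = 0)
    (hl : 0 < f l) (hlk : a l k < 0) : (f.sum fun i c => c * a i k) < 0 := by
  have hterm : ∀ i ∈ f.support, f i * a i k ≤ 0 := fun i hi =>
    mul_nonpos_of_nonneg_of_nonpos (Finsupp.le_def.1 hf i)
      (haneg i k fun h => Finsupp.mem_support_iff.1 hi (h ▸ hk))
  calc (f.sum fun i c => c * a i k) = ∑ i ∈ f.support, f i * a i k := rfl
    _ < ∑ _i ∈ f.support, (0 : ℤ) :=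
      Finset.sum_lt_sum hterm ⟨l, Finsupp.mem_support_iff.2 hl.ne', mul_neg_of_pos_of_neg hl hlk⟩
    _ = 0 := Finset.sum_const_zero

variable [DecidableEq I]

theorem simpleRefl_apply_of_ne {m : I} (h : m ≠ k) : simpleRefl a k f m = f m := by
  simp [simpleRefl, h.symm]

theorem simpleRefl_apply_self : simpleRefl a k f k = f k - f.sum fun i c => c * a i k := by
  simp [simpleRefl]

theorem simpleRefl_nonneg_and_pos (haneg : ∀ i j, i ≠ j → a i j ≤ 0) (hf : 0 ≤ f)
    (hk : f k = 0) (hl : 0 < f l) (hlk : a l k < 0) :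
    0 ≤ simpleRefl a k f ∧ 0 < simpleRefl a k f k := by
  have hpos : 0 < simpleRefl a k f k := by
    rw [simpleRefl_apply_self, hk]
    linarith [sum_mul_cartan_neg haneg hf hk hl hlk]
  refine ⟨Finsupp.le_def.2 fun m => ?_, hpos⟩
  rcases eq_or_ne m k with rfl | hm
  · exact hpos.le
  · rw [simpleRefl_apply_of_ne hm]
    exact Finsupp.le_def.1 hf m

theorem foldl_simpleRefl_nonneg_and_pos_getLast (haneg : ∀ i j, i ≠ j → a i j ≤ 0) :
    ∀ (L : List I) {l : I} {f : I →₀ ℤ}, (l :: L).IsChain (fun x y => a x y < 0) →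
      L.Nodup → (∀ x ∈ L, f x = 0) → 0 ≤ f → 0 < f l →
      0 ≤ L.foldl (fun f t => simpleRefl a t f) f ∧
        0 < L.foldl (fun f t => simpleRefl a t f) f ((l :: L).getLast (List.cons_ne_nil l L))
  | [], _, _, _, _, _, hf, hl => ⟨hf, hl⟩
  | t :: L, l, f, hchain, hnodup, hzero, hf, hl => by
    rw [List.isChain_cons_cons] at hchain
    obtain ⟨htL, hL⟩ := List.nodup_cons.1 hnodup
    obtain ⟨hf', ht⟩ := simpleRefl_nonneg_and_pos haneg hf (hzero t List.mem_cons_self) hl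
      hchain.1
    have hzero' : ∀ x ∈ L, simpleRefl a t f x = 0 := fun x hx => by
      rw [simpleRefl_apply_of_ne (ne_of_mem_of_not_mem hx htL)]
      exact hzero x (List.mem_cons_of_mem t hx)
    rw [List.getLast_cons (List.cons_ne_nil t L)]
    exact foldl_simpleRefl_nonneg_and_pos_getLast haneg L hchain.2 hL hzero' hf' ht

end SimpleRefl

theorem refl_chain_positive_general {I : Type*} [DecidableEq I] (a : I → I → ℤ)
    (haneg : ∀ i j, i ≠ j → a i j ≤ 0)
    (d : ℕ) (i j : I)
    (seq : Fin (d + 1) → I) (hinj : Function.Injective seq)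
    (h0 : seq 0 = i) (hd : seq (Fin.last d) = j)
    (hadm : ∀ k : Fin d, a (seq k.castSucc) (seq k.succ) < 0) :
    ∀ g : I →₀ ℤ,
      g = (List.ofFn fun k : Fin d => seq k.succ).foldl
            (fun f t => simpleRefl a t f) (Finsupp.single i 1) →
      0 < g j ∧ ∀ k : I, 0 ≤ g k := by
  rintro g rfl
  set L := List.ofFn fun k : Fin d => seq k.succ
  have hseq : List.ofFn seq = i :: L := by rw [List.ofFn_succ, h0]
  have hchain : (i :: L).IsChain (fun x y => a x y < 0) := by
    rw [← hseq, List.isChain_ofFn]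
    exact fun k hk => hadm ⟨k, by omega⟩
  obtain ⟨hiL, hL⟩ := List.nodup_cons.1 (hseq ▸ List.nodup_ofFn.2 hinj)
  have hzero : ∀ x ∈ L, Finsupp.single i (1 : ℤ) x = 0 := fun x hx =>
    Finsupp.single_eq_of_ne (ne_of_mem_of_not_mem hx hiL)
  have hlast : (i :: L).getLast (List.cons_ne_nil i L) = j := by
    simp only [← hseq, List.getLast_ofFn_succ, hd]
  obtain ⟨hnonneg, hpos⟩ := foldl_simpleRefl_nonneg_and_pos_getLast haneg L hchain hL hzero
    (Finsupp.single_nonneg.2 zero_le_one) (by simp)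
  exact ⟨hlast ▸ hpos, Finsupp.le_def.1 hnonneg⟩

/-- Let `W` be a (crystallographic) Coxeter group on index set `I` acting on the root lattice
via the Cartan pairings `a i j = ⟨αᵢ, αⱼ^∨⟩` (`a i i = 2`, `a i j ≤ 0` for `i ≠ j`, and
`m_{ij} > 2` exactly when `a i j < 0`).  If `(i = i₀, i₁, …, i_d = j)` is a (repetition-free)
sequence with `m_{i_{k−1}, i_k} > 2` for all `k`, then `w = s_{i_d} ⋯ s_{i_1}` satisfies:
`w(αᵢ)` is a nonnegative integral combination of simple roots in which the coefficient of
`α_j` is strictly positive, i.e. `w(αᵢ) ∈ ℤ_{>0} α_j + Σ_{k ≠ j} ℤ_{≥0} α_k`. -/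
theorem refl_chain_positive {I : Type*} [DecidableEq I] (a : I → I → ℤ)
    (ha2 : ∀ i, a i i = 2) (haneg : ∀ i j, i ≠ j → a i j ≤ 0)
    (d : ℕ) (i j : I) (hij : i ≠ j)
    (seq : Fin (d + 1) → I) (hinj : Function.Injective seq)
    (h0 : seq 0 = i) (hd : seq (Fin.last d) = j)
    (hadm : ∀ k : Fin d, a (seq k.castSucc) (seq k.succ) < 0) :
    ∀ g : I →₀ ℤ,
      g = (List.ofFn fun k : Fin d => seq k.succ).foldl
            (fun f t => simpleRefl a t f) (Finsupp.single i 1) →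
      0 < g j ∧ ∀ k : I, 0 ≤ g k :=
  refl_chain_positive_general a haneg d i j seq hinj h0 hd hadm
end

section
/- Let M̂ = {(m_1,m_2,m_{12},m_{21},m_{01},m_{02}) ∈ ℤ_{≥0}² × ℤ⁴ : m_1 m_2 = 0}. Define wt_i(m) = m_{0i} − m_i + m_j − m_{ij} for {i,j} = {1,2}, operators e_i^r as in the paper (m'_i = [m_i − m_j − r]_+, m'_j = [m_j − m_i + r]_+, m'_{ji} = m_{ji}, m'_{0j} = m_{0j}, m'_{ij} = m_{ij} + min(m_i − r, m_j), m'_{0i} = m_{0i} + r + min(m_i − r, m_j)), σ̲(m) = (m_1, m_2, m_{02}, m_{01}, m_{21}, m_{12}), and σ̲^i(m) = e_i^{−wt_i(m)}(m). Then σ̲^i ∘ σ̲^i = id, σ̲^i ∘ e_i^r = e_i^{−r} ∘ σ̲^i, σ̲ ∘ e_i^r = e_j^{−r} ∘ σ̲, σ̲^i σ̲^j σ̲^i = σ̲^j σ̲^i σ̲^j, and σ̲^i ∘ σ̲ = σ̲ ∘ σ̲^j, for {i,j} = {1,2}. -/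
/-- Tuples `(m₁, m₂, m₁₂, m₂₁, m₀₁, m₀₂) ∈ ℤ^6`. -/
abbrev M6 := ℤ × ℤ × ℤ × ℤ × ℤ × ℤ

/-- Membership in `M̂ = {(m₁,m₂,m₁₂,m₂₁,m₀₁,m₀₂) ∈ ℤ_{≥0}² × ℤ⁴ : m₁ m₂ = 0}`. -/
def inMhat : M6 → Prop :=
  fun (m1, m2, _, _, _, _) => 0 ≤ m1 ∧ 0 ≤ m2 ∧ m1 * m2 = 0

/-- `wt₁(m) = m₀₁ − m₁ + m₂ − m₁₂`. -/
def wt1 : M6 → ℤ := fun (m1, m2, m12, _, m01, _) => m01 - m1 + m2 - m12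

/-- `wt₂(m) = m₀₂ − m₂ + m₁ − m₂₁`. -/
def wt2 : M6 → ℤ := fun (m1, m2, _, m21, _, m02) => m02 - m2 + m1 - m21

/-- The operator `e₁^r` on `M̂`. -/
def E1 (r : ℤ) : M6 → M6 :=
  fun (m1, m2, m12, m21, m01, m02) =>
    (max (m1 - m2 - r) 0, max (m2 - m1 + r) 0,
      m12 + min (m1 - r) m2, m21,
      m01 + r + min (m1 - r) m2, m02)

/-- The operator `e₂^r` on `M̂`. -/
def E2 (r : ℤ) : M6 → M6 :=
  fun (m1, m2, m12, m21, m01, m02) =>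
    (max (m1 - m2 + r) 0, max (m2 - m1 - r) 0,
      m12, m21 + min (m2 - r) m1,
      m01, m02 + r + min (m2 - r) m1)

/-- `σ̲(m) = (m₁, m₂, m₀₂, m₀₁, m₂₁, m₁₂)`. -/
def sigmaBar : M6 → M6 :=
  fun (m1, m2, m12, m21, m01, m02) => (m1, m2, m02, m01, m21, m12)

/-- `σ̲¹(m) = e₁^{−wt₁(m)}(m)`. -/
def sigma1 (m : M6) : M6 := E1 (-wt1 m) m

/-- `σ̲²(m) = e₂^{−wt₂(m)}(m)`. -/
def sigma2 (m : M6) : M6 := E2 (-wt2 m) m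

set_option maxHeartbeats 4000000 in
/-- On `M̂` one has `σ̲ⁱ ∘ σ̲ⁱ = id`, `σ̲ⁱ ∘ eᵢ^r = eᵢ^{−r} ∘ σ̲ⁱ`, `σ̲ ∘ eᵢ^r = eⱼ^{−r} ∘ σ̲`,
the braid relation `σ̲ⁱ σ̲ʲ σ̲ⁱ = σ̲ʲ σ̲ⁱ σ̲ʲ`, and `σ̲ⁱ ∘ σ̲ = σ̲ ∘ σ̲ʲ`, for `{i,j} = {1,2}`. -/
theorem cactus_relations_on_Mhat :
    ∀ m : M6, inMhat m →
      (sigma1 (sigma1 m) = m ∧ sigma2 (sigma2 m) = m) ∧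
      (∀ r : ℤ, sigma1 (E1 r m) = E1 (-r) (sigma1 m) ∧
                sigma2 (E2 r m) = E2 (-r) (sigma2 m)) ∧
      (∀ r : ℤ, sigmaBar (E1 r m) = E2 (-r) (sigmaBar m) ∧
                sigmaBar (E2 r m) = E1 (-r) (sigmaBar m)) ∧
      (sigma1 (sigma2 (sigma1 m)) = sigma2 (sigma1 (sigma2 m))) ∧
      (sigma1 (sigmaBar m) = sigmaBar (sigma2 m) ∧
       sigma2 (sigmaBar m) = sigmaBar (sigma1 m)) := by
  rintro ⟨m1, m2, m12, m21, m01, m02⟩ ⟨h1, h2, h3⟩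
  rcases mul_eq_zero.mp h3 with h | h <;> subst h <;>
    refine ⟨⟨?_, ?_⟩, fun r => ⟨?_, ?_⟩, fun r => ⟨?_, ?_⟩, ?_, ?_, ?_⟩ <;>
    simp only [sigma1, sigma2, sigmaBar, E1, E2, wt1, wt2, Prod.mk.injEq,
      and_true, true_and] <;>
    omega
end
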